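/- The linear extension ψ : B^m_n → ℂ[S_n] of (d, ω) ↦ ω̃ is Stab_n(m)-equivariant: ψ(σ·b) = σ·ψ(b) for all σ ∈ Stab_n(m) and b ∈ B^m_n, where Stab_n(m) acts on ℂ[S_n] by conjugation. Consequently ψ maps the invariant subalgebra A^m_n onto the m-centraliser algebra Z_{n,m}. -/

import Mathlib

/-- An `m`-partial permutation (of ℕ): a finite domain `d` containing `[m] = {0,…,m-1}`
together with a permutation of `d`, encoded by its extension `σ` to `ℕ` which is the
identity outside `d`. -/
structure MPP (m : ℕ) where
  d : Finset ℕ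
  σ : Equiv.Perm ℕ
  range_sub : Finset.range m ⊆ d
  fix : ∀ x ∉ d, σ x = x

namespace MPP

variable {m : ℕ}

@[ext] theorem ext {p q : MPP m} (hd : p.d = q.d) (hσ : p.σ = q.σ) : p = q := by
  cases p; cases q; simp only [mk.injEq]; exact ⟨hd, hσ⟩

/-- The product of `m`-partial permutations: union of the domains, composition of the
extended permutations (restricted to the union). -/
instance : Monoid (MPP m) where
  mul p q := ⟨p.d ∪ q.d, p.σ * q.σ, p.range_sub.trans Finset.subset_union_left,
    fun x hx => by
      have hq : x ∉ q.d := fun h => hx (Finset.mem_union_right _ h)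
      have hp : x ∉ p.d := fun h => hx (Finset.mem_union_left _ h)
      simp [Equiv.Perm.mul_apply, q.fix x hq, p.fix x hp]⟩
  one := ⟨Finset.range m, 1, le_refl _, fun _ _ => rfl⟩
  mul_assoc p q r := ext (Finset.union_assoc _ _ _) (mul_assoc _ _ _)
  one_mul p := ext (Finset.union_eq_right.mpr p.range_sub) (one_mul _)
  mul_one p := ext (Finset.union_eq_left.mpr p.range_sub) (mul_one _)

@[simp] theorem mul_d (p q : MPP m) : (p * q).d = p.d ∪ q.d := rfl
@[simp] theorem mul_σ (p q : MPP m) : (p * q).σ = p.σ * q.σ := rfl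
@[simp] theorem one_d : (1 : MPP m).d = Finset.range m := rfl
@[simp] theorem one_σ : (1 : MPP m).σ = 1 := rfl

/-- Two `m`-partial permutations have the same `m`-marked cycle type iff there is a
relabelling of ℕ fixing `[m]` pointwise carrying one to the other. -/
def sameType (p q : MPP m) : Prop :=
  ∃ σ : Equiv.Perm ℕ, (∀ x < m, σ x = x) ∧ p.d.image σ = q.d ∧ σ * p.σ * σ⁻¹ = q.σ

/-- `m₁`: the number of trivial cycles `(∗)`, i.e. fixed points of the permutation lying
in the domain but outside `[m]`. -/
def m1 (p : MPP m) : ℕ := ((p.d \ Finset.range m).filter (fun x => p.σ x = x)).card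

/-- `p` padded with fixed points so that its domain becomes `[n]` (when `p.d ⊆ [n]`);
this realizes the shape `ρ̲ₙ`. -/
def padTo (n : ℕ) (p : MPP m) : MPP m :=
  ⟨p.d ∪ Finset.range n, p.σ, p.range_sub.trans Finset.subset_union_left,
   fun x hx => p.fix x fun h => hx (Finset.mem_union_left _ h)⟩

/-- `p` with `k` fresh fixed points adjoined to its domain; this realizes the shape `ρᵏ`. -/
def addFix (p : MPP m) (k : ℕ) : MPP m :=
  ⟨p.d ∪ (Finset.range (p.d.sup id + 1 + k) \ Finset.range (p.d.sup id + 1)), p.σ,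
   p.range_sub.trans Finset.subset_union_left,
   fun x hx => p.fix x fun h => hx (Finset.mem_union_left _ h)⟩

/-- A shape is proper when it has no cycle `(∗)`, i.e. no fixed point outside `[m]`. -/
def isProper (p : MPP m) : Prop := ∀ x ∈ p.d, m ≤ x → p.σ x ≠ x

/-- The subgroup `Stab_n(m)` of permutations of ℕ fixing `[m]` pointwise and fixing
everything outside `[n]` (i.e. `Stab_n(m) ≤ S_n`). -/
def StabN (m n : ℕ) : Subgroup (Equiv.Perm ℕ) where
  carrier := {σ | (∀ x < m, σ x = x) ∧ (∀ x, n ≤ x → σ x = x)}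
  one_mem' := ⟨fun _ _ => rfl, fun _ _ => rfl⟩
  mul_mem' := by
    rintro σ τ ⟨h1, h2⟩ ⟨h3, h4⟩
    exact ⟨fun x hx => by simp [Equiv.Perm.mul_apply, h3 x hx, h1 x hx],
           fun x hx => by simp [Equiv.Perm.mul_apply, h4 x hx, h2 x hx]⟩
  inv_mem' := by
    rintro σ ⟨h1, h2⟩
    refine ⟨fun x hx => ?_, fun x hx => ?_⟩
    · conv_lhs => rw [← h1 x hx]
      simp
    · conv_lhs => rw [← h2 x hx]
      simp

/-- The conjugation action of `Stab_n(m)` on `m`-partial permutations: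
`σ·(d,ω) = (σ(d), σ∘ω∘σ⁻¹)`. -/
def conjAct {n : ℕ} (σ : StabN m n) (p : MPP m) : MPP m :=
  ⟨p.d.image (σ : Equiv.Perm ℕ), (σ : Equiv.Perm ℕ) * p.σ * (σ : Equiv.Perm ℕ)⁻¹,
   fun x hx => Finset.mem_image.mpr
     ⟨x, p.range_sub hx, σ.2.1 x (Finset.mem_range.mp hx)⟩,
   fun x hx => by
     have h1 : (σ : Equiv.Perm ℕ)⁻¹ x ∉ p.d := fun h =>
       hx (Finset.mem_image.mpr ⟨_, h, by simp⟩)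
     rw [Equiv.Perm.mul_apply, Equiv.Perm.mul_apply, p.fix _ h1]; simp⟩

end MPP

section Aux

open Classical in
/-- Map a permutation fixing `[n]ᶜ` to the partial permutation with domain `[n]`. -/
noncomputable def toMPP (m n : ℕ) (h : m ≤ n) (u : Equiv.Perm ℕ) : MPP m :=
  if hu : ∀ x, n ≤ x → u x = x then
    ⟨Finset.range n, u, Finset.range_subset_range.mpr h,
      fun x hx => hu x (le_of_not_gt (by simpa using hx))⟩
  else 1

lemma toMPP_d (m n : ℕ) (h : m ≤ n) (u : Equiv.Perm ℕ)
    (hu : ∀ x, n ≤ x → u x = x) : (toMPP m n h u).d = Finset.range n := by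
  unfold toMPP; rw [dif_pos hu]

lemma toMPP_σ (m n : ℕ) (h : m ≤ n) (u : Equiv.Perm ℕ)
    (hu : ∀ x, n ≤ x → u x = x) : (toMPP m n h u).σ = u := by
  unfold toMPP; rw [dif_pos hu]

/-- Conjugation by `g` as an `Equiv` on `Perm ℕ`. -/
def conjEquiv (g : Equiv.Perm ℕ) : Equiv.Perm ℕ ≃ Equiv.Perm ℕ :=
  ⟨fun u => g * u * g⁻¹, fun u => g⁻¹ * u * g, fun u => by group, fun u => by group⟩

lemma conj_mapDomain_apply (g : Equiv.Perm ℕ) (z : MonoidAlgebra ℂ (Equiv.Perm ℕ))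
    (x : Equiv.Perm ℕ) :
    (MonoidAlgebra.mapDomain (fun u => g * u * g⁻¹) z).coeff x = z.coeff (g⁻¹ * x * g) := by
  show Finsupp.mapDomain (fun u => g * u * g⁻¹) z.coeff x = _
  have hfe : (fun u => g * u * g⁻¹) = ⇑(conjEquiv g) := rfl
  rw [hfe, Finsupp.mapDomain_equiv_apply]
  rfl

lemma conj_fixed_iff (g : Equiv.Perm ℕ) (z : MonoidAlgebra ℂ (Equiv.Perm ℕ)) :
    MonoidAlgebra.mapDomain (fun u => g * u * g⁻¹) z = z ↔
      MonoidAlgebra.single g (1 : ℂ) * z = z * MonoidAlgebra.single g (1 : ℂ) := by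
  constructor
  · intro hz
    ext y
    rw [MonoidAlgebra.coeff_single_mul_apply, MonoidAlgebra.coeff_mul_single_apply, one_mul,
      mul_one]
    have h1 : (MonoidAlgebra.mapDomain (fun u => g * u * g⁻¹) z).coeff (y * g⁻¹) =
      z.coeff (y * g⁻¹) := by rw [hz]
    rw [conj_mapDomain_apply] at h1
    have e1 : g⁻¹ * (y * g⁻¹) * g = g⁻¹ * y := by group
    rw [e1] at h1
    exact h1
  · intro hcomm
    ext x
    rw [conj_mapDomain_apply]
    have h1 : (MonoidAlgebra.single g (1 : ℂ) * z).coeff (x * g) =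
      (z * MonoidAlgebra.single g (1 : ℂ)).coeff (x * g) := by rw [hcomm]
    rw [MonoidAlgebra.coeff_single_mul_apply, MonoidAlgebra.coeff_mul_single_apply, one_mul,
      mul_one]
      at h1
    have e1 : g⁻¹ * (x * g) = g⁻¹ * x * g := by group
    have e2 : x * g * g⁻¹ = x := by group
    rw [e1, e2] at h1
    exact h1

lemma stab_inv_fix {m n : ℕ} (τ : MPP.StabN m n) {x : ℕ} (hx : n ≤ x) :
    ((τ : Equiv.Perm ℕ))⁻¹ x = x := by
  conv_lhs => rw [← τ.2.2 x hx]
  simp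

lemma stab_image_range {m n : ℕ} (τ : MPP.StabN m n) :
    (Finset.range n).image (⇑(τ : Equiv.Perm ℕ)) = Finset.range n := by
  apply Finset.eq_of_subset_of_card_le
  · intro y hy
    obtain ⟨x, hx, rfl⟩ := Finset.mem_image.mp hy
    simp only [Finset.mem_range] at hx ⊢
    by_contra hge
    have h1 : (τ : Equiv.Perm ℕ) ((τ : Equiv.Perm ℕ) x) = (τ : Equiv.Perm ℕ) x :=
      τ.2.2 _ (le_of_not_gt hge)
    have h2 : (τ : Equiv.Perm ℕ) x = x := (τ : Equiv.Perm ℕ).injective h1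
    omega
  · rw [Finset.card_image_of_injective _ (τ : Equiv.Perm ℕ).injective]

lemma conjAct_toMPP {m n : ℕ} (h : m ≤ n) (τ : MPP.StabN m n) (u : Equiv.Perm ℕ)
    (hu : ∀ x, n ≤ x → u x = x) :
    MPP.conjAct τ (toMPP m n h u) =
      toMPP m n h ((τ : Equiv.Perm ℕ) * u * (τ : Equiv.Perm ℕ)⁻¹) := by
  have hcu : ∀ x, n ≤ x → ((τ : Equiv.Perm ℕ) * u * (τ : Equiv.Perm ℕ)⁻¹) x = x := by
    intro x hx
    simp only [Equiv.Perm.mul_apply]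
    rw [stab_inv_fix τ hx, hu x hx, τ.2.2 x hx]
  apply MPP.ext
  · show (toMPP m n h u).d.image _ = _
    rw [toMPP_d m n h u hu, toMPP_d m n h _ hcu, stab_image_range]
  · show (τ : Equiv.Perm ℕ) * (toMPP m n h u).σ * (τ : Equiv.Perm ℕ)⁻¹ = _
    rw [toMPP_σ m n h u hu, toMPP_σ m n h _ hcu]

end Aux

/-- the linear extension ψ : B^m_n → ℂ[S_n] of (d,ω) ↦ ω̃ is
Stab_n(m)-equivariant, and maps the invariant subalgebra A^m_n onto the
m-centraliser algebra Z_{n,m}. Here B^m_n consists of the elements of the semigroup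
algebra of m-partial permutations supported on partial permutations of [n], and
ℂ[S_n] of the elements of ℂ[Perm ℕ] supported on permutations fixing [n]ᶜ. -/
theorem psi_equivariant_and_image (m n : ℕ) (h : m ≤ n) :
    (∀ (σ : MPP.StabN m n) (b : MonoidAlgebra ℂ (MPP m)),
      MonoidAlgebra.mapDomain MPP.σ (MonoidAlgebra.mapDomain (MPP.conjAct σ) b) =
        MonoidAlgebra.mapDomain (fun τ => (σ : Equiv.Perm ℕ) * τ * (σ : Equiv.Perm ℕ)⁻¹)
          (MonoidAlgebra.mapDomain MPP.σ b)) ∧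
    (MonoidAlgebra.mapDomain MPP.σ) '' {b : MonoidAlgebra ℂ (MPP m) |
        (∀ p ∈ b.coeff.support, p.d ⊆ Finset.range n) ∧
        ∀ σ : MPP.StabN m n, MonoidAlgebra.mapDomain (MPP.conjAct σ) b = b} =
      {z : MonoidAlgebra ℂ (Equiv.Perm ℕ) |
        (∀ u ∈ z.coeff.support, ∀ x, n ≤ x → u x = x) ∧
        ∀ τ : MPP.StabN m n,
          MonoidAlgebra.single ((τ : Equiv.Perm ℕ)) (1 : ℂ) * z =
            z * MonoidAlgebra.single ((τ : Equiv.Perm ℕ)) (1 : ℂ)} := by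
  classical
  have equivar : ∀ (σ : MPP.StabN m n) (b : MonoidAlgebra ℂ (MPP m)),
      MonoidAlgebra.mapDomain MPP.σ (MonoidAlgebra.mapDomain (MPP.conjAct σ) b) =
        MonoidAlgebra.mapDomain (fun τ => (σ : Equiv.Perm ℕ) * τ * (σ : Equiv.Perm ℕ)⁻¹)
          (MonoidAlgebra.mapDomain MPP.σ b) := by
    intro σ b
    apply MonoidAlgebra.ext
    show Finsupp.mapDomain MPP.σ (Finsupp.mapDomain (MPP.conjAct σ) b.coeff) =
      Finsupp.mapDomain (fun τ => (σ : Equiv.Perm ℕ) * τ * (σ : Equiv.Perm ℕ)⁻¹)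
        (Finsupp.mapDomain MPP.σ b.coeff)
    rw [← Finsupp.mapDomain_comp, ← Finsupp.mapDomain_comp]
    rfl
  refine ⟨equivar, ?_⟩
  ext z
  simp only [Set.mem_image, Set.mem_setOf_eq]
  constructor
  · rintro ⟨b, ⟨hsupp, hinv⟩, rfl⟩
    constructor
    · intro u hu x hx
      obtain ⟨p, hp, rfl⟩ := Finset.mem_image.mp (Finsupp.mapDomain_support (f := MPP.σ) (s := b.coeff) hu)
      refine p.fix x fun hxd => ?_
      have := Finset.mem_range.mp (hsupp p hp hxd)
      omega
    · intro τ
      rw [← conj_fixed_iff, ← equivar τ b, hinv τ]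
  · rintro ⟨hz, hcomm⟩
    have hσcomp : ∀ u ∈ z.coeff.support, (MPP.σ ∘ toMPP m n h) u = id u := by
      intro u hu
      exact toMPP_σ m n h u (hz u hu)
    refine ⟨MonoidAlgebra.mapDomain (toMPP m n h) z, ⟨?_, ?_⟩, ?_⟩
    · intro p hp
      obtain ⟨u, hu, rfl⟩ := Finset.mem_image.mp (Finsupp.mapDomain_support (f := toMPP m n h) (s := z.coeff) hp)
      rw [toMPP_d m n h u (hz u hu)]
    · intro τ
      apply MonoidAlgebra.ext
      show Finsupp.mapDomain (MPP.conjAct τ) (Finsupp.mapDomain (toMPP m n h) z.coeff) =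
        Finsupp.mapDomain (toMPP m n h) z.coeff
      have h2 : Finsupp.mapDomain (MPP.conjAct τ ∘ toMPP m n h) z.coeff =
          Finsupp.mapDomain
            (toMPP m n h ∘ fun u => (τ : Equiv.Perm ℕ) * u * (τ : Equiv.Perm ℕ)⁻¹) z.coeff :=
        Finsupp.mapDomain_congr (fun u hu => conjAct_toMPP h τ u (hz u hu))
      rw [← Finsupp.mapDomain_comp, h2, Finsupp.mapDomain_comp]
      exact congrArg (Finsupp.mapDomain (toMPP m n h))
        (congrArg MonoidAlgebra.coeff ((conj_fixed_iff _ _).mpr (hcomm τ)))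
    · apply MonoidAlgebra.ext
      show Finsupp.mapDomain MPP.σ (Finsupp.mapDomain (toMPP m n h) z.coeff) = z.coeff
      rw [← Finsupp.mapDomain_comp, Finsupp.mapDomain_congr hσcomp,
        Finsupp.mapDomain_id]
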